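/- arXiv:1209.4628 — 5 statements merged into one kernel-verified Lean document; each statement's English description precedes it below -/
import Mathlib

section
/- Let (Ge, Go) be a connected bipartite signed graph on a finite nonempty vertex type V, and let A ∈ S(Ge, Go) be positive semidefinite. Then every nonzero vector x in the kernel of A has all of its entries nonzero. -/
open Matrix

/-- The set `S(Ge, Go)` of real symmetric matrices compatible with the signed graph
encoded by the pair of simple graphs `(Ge, Go)` (even graph / odd graph). -/
def SignedSet {V : Type*} (Ge Go : SimpleGraph V) : Set (Matrix V V ℝ) :=
  {A | A.IsSymm ∧ ∀ i j,
    ((Ge.Adj i j ∧ ¬ Go.Adj i j) → A i j < 0) ∧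
    ((Go.Adj i j ∧ ¬ Ge.Adj i j) → 0 < A i j) ∧
    ((i ≠ j ∧ ¬ Ge.Adj i j ∧ ¬ Go.Adj i j) → A i j = 0)}

/-- The nullity of a matrix: the dimension of its kernel. -/
noncomputable def matNullity {V : Type*} [Fintype V] (A : Matrix V V ℝ) : ℕ :=
  Module.finrank ℝ (LinearMap.ker A.mulVecLin)

/-- The Strong Arnold Property for a matrix with respect to a signed graph `(Ge, Go)`. -/
def HasSAP {V : Type*} [Fintype V] (Ge Go : SimpleGraph V) (A : Matrix V V ℝ) : Prop :=
  ∀ X : Matrix V V ℝ, X.IsSymm →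
    (∀ i j, (i = j ∨ (Ge ⊔ Go).Adj i j) → X i j = 0) →
    A * X = 0 → X = 0

/-- `ν(Ge, Go)`: the maximum nullity of a positive semidefinite matrix in `S(Ge, Go)`
having the Strong Arnold Property. -/
noncomputable def nuSigned {V : Type*} [Fintype V] (Ge Go : SimpleGraph V) : ℕ :=
  sSup {n | ∃ A ∈ SignedSet Ge Go, A.PosSemidef ∧ HasSAP Ge Go A ∧ matNullity A = n}

/-- `M₊(Ge, Go)`: the maximum nullity of a positive semidefinite matrix in `S(Ge, Go)`. -/
noncomputable def MplusSigned {V : Type*} [Fintype V] (Ge Go : SimpleGraph V) : ℕ :=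
  sSup {n | ∃ A ∈ SignedSet Ge Go, A.PosSemidef ∧ matNullity A = n}

/-- A signed graph `(Ge, Go)` is bipartite (balanced) if some set `U` of vertices meets
every odd edge in exactly one end and every even edge in both ends or neither end. -/
def IsBalanced {V : Type*} (Ge Go : SimpleGraph V) : Prop :=
  ∃ U : Set V, (∀ i j, Go.Adj i j → ((i ∈ U) ↔ j ∉ U)) ∧
    (∀ i j, Ge.Adj i j → ((i ∈ U) ↔ j ∈ U))

/-!
Switching the signs of the vertices of a balancing set `U`, i.e. conjugating by the diagonal
`±1` matrix `D`, turns `A` into a positive semidefinite matrix `B = DAD` whose off-diagonal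
entries are negative on edges and zero elsewhere, with `Dx ∈ ker B`. For such a matrix and
`y ∈ ker B`, `|y|ᵀ B |y| ≤ yᵀ B y = 0`, so `|y| ∈ ker B` as well. The row of `B |y| = 0` at a
vertex where `y` vanishes is a sum of nonpositive terms, so `y` vanishes at all its neighbours,
and connectivity spreads the zero over the whole graph.
-/

theorem SimpleGraph.Reachable.mem_of_adj_mem {V : Type*} {G : SimpleGraph V} {s : Set V}
    (hs : ∀ ⦃u v⦄, G.Adj u v → u ∈ s → v ∈ s) {u v : V} (huv : G.Reachable u v)
    (hu : u ∈ s) : v ∈ s := by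
  rw [SimpleGraph.reachable_iff_reflTransGen] at huv
  induction huv with
  | refl => exact hu
  | tail _ hadj ih => exact hs hadj ih

namespace Matrix

variable {n : Type*} [Fintype n] {A : Matrix n n ℝ}

theorem dotProduct_mulVec_abs_le (hoff : ∀ i j, i ≠ j → A i j ≤ 0) (x : n → ℝ) :
    |x| ⬝ᵥ A *ᵥ |x| ≤ x ⬝ᵥ A *ᵥ x := by
  simp only [dotProduct, mulVec, Finset.mul_sum]
  refine Finset.sum_le_sum fun i _ => Finset.sum_le_sum fun j _ => ?_
  simp only [Pi.abs_apply]
  rcases eq_or_ne i j with rfl | hij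
  · exact le_of_eq (by linear_combination A i i * abs_mul_abs_self (x i))
  · calc |x i| * (A i j * |x j|) = A i j * (|x i| * |x j|) := by ring
      _ ≤ A i j * (x i * x j) :=
        mul_le_mul_of_nonpos_left (by rw [← abs_mul]; exact le_abs_self _) (hoff i j hij)
      _ = x i * (A i j * x j) := by ring

theorem PosSemidef.mulVec_abs_eq_zero (hA : A.PosSemidef) (hoff : ∀ i j, i ≠ j → A i j ≤ 0)
    {x : n → ℝ} (hx : A *ᵥ x = 0) : A *ᵥ |x| = 0 := by
  rw [← hA.dotProduct_mulVec_zero_iff]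
  refine le_antisymm ?_ (hA.dotProduct_mulVec_nonneg _)
  simpa [hx] using dotProduct_mulVec_abs_le hoff x

theorem eq_zero_of_mulVec_eq_zero_of_nonneg (hoff : ∀ i j, i ≠ j → A i j ≤ 0) {v : n → ℝ}
    (hv : 0 ≤ v) (hAv : A *ᵥ v = 0) {i j : n} (hvi : v i = 0) (hij : A i j < 0) : v j = 0 := by
  have hterms : ∀ k ∈ Finset.univ, A i k * v k ≤ 0 := fun k _ => by
    rcases eq_or_ne i k with rfl | hik
    · simp [hvi]
    · exact mul_nonpos_of_nonpos_of_nonneg (hoff i k hik) (hv k)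
  have hrow : ∑ k, A i k * v k = 0 := congrFun hAv i
  have hj := (Finset.sum_eq_zero_iff_of_nonpos hterms).mp hrow j (Finset.mem_univ j)
  exact (mul_eq_zero.mp hj).resolve_left hij.ne

theorem PosSemidef.apply_ne_zero_of_preconnected {G : SimpleGraph n} (hG : G.Preconnected)
    (hA : A.PosSemidef) (hoff : ∀ i j, i ≠ j → A i j ≤ 0) (hadj : ∀ i j, G.Adj i j → A i j < 0)
    {x : n → ℝ} (hx : A *ᵥ x = 0) (hx0 : x ≠ 0) (i : n) : x i ≠ 0 := by
  intro hxi
  refine hx0 (funext fun j => abs_eq_zero.mp ?_)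
  refine (hG i j).mem_of_adj_mem (s := {k | |x| k = 0}) (fun u v huv hu => ?_) (by simp [hxi])
  exact eq_zero_of_mulVec_eq_zero_of_nonneg hoff (abs_nonneg x) (hA.mulVec_abs_eq_zero hoff hx)
    hu (hadj u v huv)

end Matrix

theorem SignedSet.apply_eq_zero_of_not_adj {V : Type*} {Ge Go : SimpleGraph V}
    {A : Matrix V V ℝ} (hA : A ∈ SignedSet Ge Go) {i j : V} (hij : i ≠ j)
    (hadj : ¬(Ge ⊔ Go).Adj i j) : A i j = 0 := by
  rw [SimpleGraph.sup_adj, not_or] at hadj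
  exact (hA.2 i j).2.2 ⟨hij, hadj⟩

section Switching

variable {V : Type*} {Ge Go : SimpleGraph V} {U : Set V}

def IsBalancingSet (Ge Go : SimpleGraph V) (U : Set V) : Prop :=
  (∀ i j, Go.Adj i j → ((i ∈ U) ↔ j ∉ U)) ∧ (∀ i j, Ge.Adj i j → ((i ∈ U) ↔ j ∈ U))

open Classical in
noncomputable def switchingSign (U : Set V) (i : V) : ℝ := if i ∈ U then -1 else 1

theorem switchingSign_mul_self (U : Set V) (i : V) :
    switchingSign U i * switchingSign U i = 1 := by
  unfold switchingSign; split_ifs <;> norm_num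

theorem switchingSign_mul_of_iff {i j : V} (h : i ∈ U ↔ j ∈ U) :
    switchingSign U i * switchingSign U j = 1 := by
  unfold switchingSign; split_ifs <;> simp_all

theorem switchingSign_mul_of_iff_not {i j : V} (h : i ∈ U ↔ j ∉ U) :
    switchingSign U i * switchingSign U j = -1 := by
  unfold switchingSign; split_ifs <;> simp_all

theorem IsBalancingSet.not_adj_and_adj (hU : IsBalancingSet Ge Go U) (i j : V) :
    ¬(Ge.Adj i j ∧ Go.Adj i j) := fun ⟨hGe, hGo⟩ => by
  have := hU.1 i j hGo
  have := hU.2 i j hGe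
  tauto

variable [Fintype V] [DecidableEq V]

theorem switchingSign_diagonal_mul_self (U : Set V) :
    diagonal (switchingSign U) * diagonal (switchingSign U) = 1 := by
  rw [diagonal_mul_diagonal, ← diagonal_one]
  exact congrArg diagonal (funext (switchingSign_mul_self U))

theorem IsBalancingSet.switching_apply_neg (hU : IsBalancingSet Ge Go U)
    {A : Matrix V V ℝ} (hA : A ∈ SignedSet Ge Go) {i j : V} (hadj : (Ge ⊔ Go).Adj i j) :
    (diagonal (switchingSign U) * A * diagonal (switchingSign U)) i j < 0 := by
  rw [mul_diagonal, diagonal_mul, mul_right_comm]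
  rcases hadj with hGe | hGo
  · rw [switchingSign_mul_of_iff (hU.2 i j hGe), one_mul]
    exact (hA.2 i j).1 ⟨hGe, fun hGo => hU.not_adj_and_adj i j ⟨hGe, hGo⟩⟩
  · rw [switchingSign_mul_of_iff_not (hU.1 i j hGo), neg_one_mul, neg_neg_iff_pos]
    exact (hA.2 i j).2.1 ⟨hGo, fun hGe => hU.not_adj_and_adj i j ⟨hGe, hGo⟩⟩

theorem IsBalancingSet.switching_apply_nonpos (hU : IsBalancingSet Ge Go U)
    {A : Matrix V V ℝ} (hA : A ∈ SignedSet Ge Go) {i j : V} (hij : i ≠ j) :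
    (diagonal (switchingSign U) * A * diagonal (switchingSign U)) i j ≤ 0 := by
  by_cases hadj : (Ge ⊔ Go).Adj i j
  · exact (hU.switching_apply_neg hA hadj).le
  · rw [mul_diagonal, diagonal_mul, SignedSet.apply_eq_zero_of_not_adj hA hij hadj, mul_zero,
      zero_mul]

end Switching

theorem stmt0_general {V : Type*} [Fintype V] [DecidableEq V]
    (Ge Go : SimpleGraph V)
    (hconn : (Ge ⊔ Go).Connected)
    (hbip : IsBalanced Ge Go)
    (A : Matrix V V ℝ) (hA : A ∈ SignedSet Ge Go) (hpsd : A.PosSemidef)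
    (x : V → ℝ) (hker : A.mulVec x = 0) (hx : x ≠ 0) :
    ∀ i, x i ≠ 0 := by
  obtain ⟨U, hU : IsBalancingSet Ge Go U⟩ := hbip
  set D := diagonal (switchingSign U)
  have hDD : D * D = 1 := switchingSign_diagonal_mul_self U
  have hB : (D * A * D).PosSemidef := by
    simpa [D] using hpsd.mul_mul_conjTranspose_same D
  have hBx : (D * A * D) *ᵥ (D *ᵥ x) = 0 := by
    rw [mulVec_mulVec, mul_assoc, mul_assoc, hDD, mul_one, ← mulVec_mulVec, hker, mulVec_zero]
  have hDx : D *ᵥ x ≠ 0 := fun h => hx <| by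
    rw [← one_mulVec x, ← hDD, ← mulVec_mulVec, h, mulVec_zero]
  intro i hxi
  refine hB.apply_ne_zero_of_preconnected hconn.preconnected
    (fun _ _ => hU.switching_apply_nonpos hA) (fun _ _ => hU.switching_apply_neg hA) hBx hDx i ?_
  simp [D, mulVec_diagonal, hxi]

/-- In a connected bipartite signed graph, any nonzero kernel vector of a
positive semidefinite matrix in `S(Ge, Go)` has all entries nonzero. -/
theorem stmt0 {V : Type*} [Fintype V] [DecidableEq V] [Nonempty V]
    (Ge Go : SimpleGraph V)
    (hconn : (Ge ⊔ Go).Connected)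
    (hbip : IsBalanced Ge Go)
    (A : Matrix V V ℝ) (hA : A ∈ SignedSet Ge Go) (hpsd : A.PosSemidef)
    (x : V → ℝ) (hker : A.mulVec x = 0) (hx : x ≠ 0) :
    ∀ i, x i ≠ 0 :=
  stmt0_general Ge Go hconn hbip A hA hpsd x hker hx
end

section
/- If A is a positive definite real n×n matrix all of whose off-diagonal entries are nonpositive (A i j ≤ 0 for all i ≠ j), then every entry of the inverse matrix A⁻¹ is nonnegative. -/
open Matrix

/-!
Write `x = x⁺ - x⁻`. The vectors `x⁺` and `x⁻` have disjoint supports, so when the off-diagonal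
entries of `A` are nonpositive, `x⁻ ⬝ᵥ A *ᵥ x⁺ ≤ 0`. If moreover `A *ᵥ x ≥ 0`, then
`x⁻ ⬝ᵥ A *ᵥ x⁻ ≤ x⁻ ⬝ᵥ A *ᵥ x⁺ - x⁻ ⬝ᵥ A *ᵥ x ≤ 0`, which for positive definite `A` forces
`x⁻ = 0`. The `j`-th column of `A⁻¹` solves `A *ᵥ x = Pi.single j 1 ≥ 0`, hence is nonnegative.
-/

section

variable {ι R : Type*} [Fintype ι] [CommRing R] [LinearOrder R] [IsStrictOrderedRing R]

lemma negPart_mul_posPart_eq_zero (a : R) : a⁻ * a⁺ = 0 := by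
  rcases le_total a 0 with h | h
  · rw [posPart_eq_zero.mpr h, mul_zero]
  · rw [negPart_eq_zero.mpr h, zero_mul]

lemma Matrix.negPart_dotProduct_mulVec_posPart_nonpos {A : Matrix ι ι R}
    (hoff : ∀ i j, i ≠ j → A i j ≤ 0) (x : ι → R) : x⁻ ⬝ᵥ A *ᵥ x⁺ ≤ 0 := by
  simp only [dotProduct, mulVec, Finset.mul_sum]
  refine Finset.sum_nonpos fun i _ => Finset.sum_nonpos fun j _ => ?_
  rw [Pi.negPart_apply, Pi.posPart_apply]
  rcases eq_or_ne i j with rfl | hij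
  · rw [mul_left_comm, negPart_mul_posPart_eq_zero, mul_zero]
  · exact mul_nonpos_of_nonneg_of_nonpos (negPart_nonneg _)
      (mul_nonpos_of_nonpos_of_nonneg (hoff i j hij) (posPart_nonneg _))

variable [StarRing R] [TrivialStar R]

theorem Matrix.PosDef.nonneg_of_mulVec_nonneg {A : Matrix ι ι R} (hA : A.PosDef)
    (hoff : ∀ i j, i ≠ j → A i j ≤ 0) {x : ι → R} (hx : 0 ≤ A *ᵥ x) : 0 ≤ x := by
  have hsplit : x⁻ ⬝ᵥ A *ᵥ x = x⁻ ⬝ᵥ A *ᵥ x⁺ - x⁻ ⬝ᵥ A *ᵥ x⁻ := by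
    rw [← dotProduct_sub, ← mulVec_sub, posPart_sub_negPart]
  have hneg : x⁻ ⬝ᵥ A *ᵥ x⁻ ≤ 0 := by
    have hAx := dotProduct_nonneg_of_nonneg (negPart_nonneg x) hx
    linarith [negPart_dotProduct_mulVec_posPart_nonpos hoff x]
  have hzero : x⁻ = 0 := by
    by_contra hne
    have hpos := hA.dotProduct_mulVec_pos hne
    rw [star_trivial] at hpos
    exact hpos.not_ge hneg
  exact negPart_eq_zero.mp hzero

end

theorem Matrix.PosDef.inv_nonneg_of_offDiag_nonpos {ι K : Type*} [Fintype ι] [DecidableEq ι]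
    [Field K] [LinearOrder K] [IsStrictOrderedRing K] [StarRing K] [TrivialStar K]
    {A : Matrix ι ι K} (hA : A.PosDef) (hoff : ∀ i j, i ≠ j → A i j ≤ 0) (i j : ι) :
    0 ≤ A⁻¹ i j := by
  have hcol : A *ᵥ (A⁻¹ *ᵥ Pi.single j 1) = Pi.single j 1 := by
    rw [mulVec_mulVec, mul_nonsing_inv A ((isUnit_iff_isUnit_det A).mp hA.isUnit), one_mulVec]
  have := hA.nonneg_of_mulVec_nonneg hoff (hcol ▸ Pi.single_nonneg.mpr zero_le_one) i
  rwa [mulVec_single_one] at this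

/-- A positive definite matrix with nonpositive off-diagonal entries has an
inverse all of whose entries are nonnegative. -/
theorem stmt2 {n : ℕ} (A : Matrix (Fin n) (Fin n) ℝ)
    (hpd : A.PosDef) (hoff : ∀ i j, i ≠ j → A i j ≤ 0) :
    ∀ i j, 0 ≤ A⁻¹ i j :=
  hpd.inv_nonneg_of_offDiag_nonpos hoff
end

section
/- Let (Ge, Go) be a connected bipartite signed graph on a finite vertex type V, let A ∈ S(Ge, Go) be positive semidefinite, and let C be a proper subset of V. Then the principal submatrix A[C] (the restriction of A to rows and columns indexed by C) is positive definite. -/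
/-! Balance gives signs `s i = ±1` with `s i * s j` equal to `-1` on odd and `1` on even edges, so
`B = diag s * A * diag s` is positive semidefinite, negative along the edges of the connected
graph `Ge ⊔ Go`, and zero off them. For such a matrix, `B u = 0` forces `B |u| = 0`, since
`|u|ᵀ B |u| ≤ uᵀ B u = 0`; reading `(B |u|) i = 0` as a sum of nonpositive terms shows that the
zeros of `|u|` spread along edges. Hence a kernel vector of `A` vanishing at one vertex vanishes
everywhere. A nonzero `x` with `xᵀ A[C] x = 0`, extended by zero, would be such a kernel vector,
vanishing at any vertex outside `C`. -/

open Matrix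

namespace Matrix

variable {n : Type*} [Fintype n] {B : Matrix n n ℝ}

theorem PosSemidef.mulVec_abs_eq_zero_s3 (hB : B.PosSemidef) (hoff : ∀ i j, i ≠ j → B i j ≤ 0)
    {u : n → ℝ} (hu : B *ᵥ u = 0) : B *ᵥ |u| = 0 := by
  refine (hB.dotProduct_mulVec_zero_iff |u|).mp (le_antisymm ?_ (hB.dotProduct_mulVec_nonneg _))
  calc star |u| ⬝ᵥ B *ᵥ |u| ≤ u ⬝ᵥ B *ᵥ u := by
        simp only [star_trivial, dotProduct, mulVec, Finset.mul_sum, Pi.abs_apply]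
        refine Finset.sum_le_sum fun i _ => Finset.sum_le_sum fun j _ => ?_
        obtain rfl | hij := eq_or_ne i j
        · exact le_of_eq (by linear_combination B i i * abs_mul_abs_self (u i))
        · have h := mul_le_mul_of_nonpos_left (le_abs_self (u i * u j)) (hoff i j hij)
          rw [abs_mul] at h
          linarith
    _ = 0 := by rw [hu, dotProduct_zero]

theorem eq_zero_of_nonneg_of_mulVec_eq_zero {G : SimpleGraph n} (hG : G.Preconnected)
    (hoff : ∀ i j, i ≠ j → B i j ≤ 0) (hadj : ∀ i j, G.Adj i j → B i j < 0)
    {y : n → ℝ} (hy : 0 ≤ y) (hBy : B *ᵥ y = 0) {v : n} (hv : y v = 0) : y = 0 := by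
  have hstep : ∀ i j, G.Adj i j → y i = 0 → y j = 0 := by
    intro i j hij hi
    have hterms : ∀ k ∈ Finset.univ, B i k * y k ≤ 0 := fun k _ => by
      obtain rfl | hik := eq_or_ne i k
      · simp [hi]
      · exact mul_nonpos_of_nonpos_of_nonneg (hoff i k hik) (hy k)
    have hrow : ∑ k, B i k * y k = 0 := congrFun hBy i
    have hj := (Finset.sum_eq_zero_iff_of_nonpos hterms).mp hrow j (Finset.mem_univ j)
    exact (mul_eq_zero.mp hj).resolve_left (hadj i j hij).ne
  have hwalk : ∀ {a b : n}, G.Walk a b → y a = 0 → y b = 0 := by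
    intro a b w
    induction w with
    | nil => exact id
    | cons h _ ih => exact fun ha => ih (hstep _ _ h ha)
  funext w
  exact hwalk (hG v w).some hv

theorem PosSemidef.eq_zero_of_mulVec_eq_zero {G : SimpleGraph n} (hG : G.Preconnected)
    (hB : B.PosSemidef) (hoff : ∀ i j, i ≠ j → B i j ≤ 0) (hadj : ∀ i j, G.Adj i j → B i j < 0)
    {u : n → ℝ} (hu : B *ᵥ u = 0) {v : n} (hv : u v = 0) : u = 0 :=
  (Pi.abs_eq_zero u).mp <| eq_zero_of_nonneg_of_mulVec_eq_zero hG hoff hadj (abs_nonneg u)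
    (hB.mulVec_abs_eq_zero_s3 hoff hu) (by simp [hv] : |u| v = 0)

theorem dotProduct_submatrix_mulVec_eq_extend {m : Type*} [Fintype m] (A : Matrix n n ℝ)
    {e : m → n} (he : Function.Injective e) (x : m → ℝ) :
    x ⬝ᵥ A.submatrix e e *ᵥ x =
      Function.extend e x 0 ⬝ᵥ A *ᵥ Function.extend e x 0 := by
  have hoff : ∀ i ∉ Set.range e, Function.extend e x 0 i = 0 := fun i hi =>
    Function.extend_apply' _ _ _ (by simpa using hi)
  refine Fintype.sum_of_injective e he _ _ (fun i hi => by simp [hoff i hi]) fun i => ?_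
  simp only [he.extend_apply, mulVec, dotProduct, submatrix_apply]
  congr 1
  exact Fintype.sum_of_injective e he _ _ (fun j hj => by simp [hoff j hj])
    fun j => by rw [he.extend_apply]

theorem PosSemidef.posDef_submatrix_of_ker {m : Type*} [Fintype m] {A : Matrix n n ℝ}
    (hA : A.PosSemidef) {e : m → n} (he : Function.Injective e)
    (hker : ∀ z, A *ᵥ z = 0 → (∀ i ∉ Set.range e, z i = 0) → z = 0) :
    (A.submatrix e e).PosDef := by
  refine .of_dotProduct_mulVec_pos (hA.1.submatrix e) fun x hx => ?_
  refine lt_of_le_of_ne ((hA.submatrix e).dotProduct_mulVec_nonneg x) fun hzero => hx ?_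
  rw [star_trivial, dotProduct_submatrix_mulVec_eq_extend A he] at hzero
  set z := Function.extend e x 0
  have hz : A *ᵥ z = 0 := (hA.dotProduct_mulVec_zero_iff z).mp <| by
    rw [star_trivial, ← hzero]
  have hz0 : z = 0 := hker z hz fun i hi => Function.extend_apply' _ _ _ (by simpa using hi)
  funext i
  simpa [z, he.extend_apply] using congrFun hz0 (e i)

end Matrix

section SignedGraph

variable {V : Type*} {Ge Go : SimpleGraph V}

/-- A switching of the signed graph `(Ge, Go)` into one whose edges are all even. -/
structure IsSwitching (Ge Go : SimpleGraph V) (s : V → ℝ) : Prop where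
  mul_self : ∀ i, s i * s i = 1
  mul_of_even : ∀ {i j}, Ge.Adj i j → s i * s j = 1
  mul_of_odd : ∀ {i j}, Go.Adj i j → s i * s j = -1

theorem IsBalanced.exists_isSwitching (h : IsBalanced Ge Go) : ∃ s, IsSwitching Ge Go s := by
  classical
  obtain ⟨U, hodd, heven⟩ := h
  refine ⟨fun i => if i ∈ U then 1 else -1, ⟨fun i => by split_ifs <;> norm_num, ?_, ?_⟩⟩
  · intro i j hij
    by_cases hi : i ∈ U <;> simp [hi, (heven i j hij).not.mp, (heven i j hij).mp]
  · intro i j hij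
    by_cases hi : i ∈ U <;> simp [hi, (hodd i j hij).mp, (hodd i j hij).not_left.mp]

namespace SignedSet

variable {A : Matrix V V ℝ} {s : V → ℝ}

theorem switching_apply_neg (hA : A ∈ SignedSet Ge Go) (hs : IsSwitching Ge Go s) {i j : V}
    (hij : (Ge ⊔ Go).Adj i j) : s i * A i j * s j < 0 := by
  have hsA : s i * A i j * s j = A i j * (s i * s j) := by ring
  rcases hij with he | ho
  · have hno : ¬ Go.Adj i j := fun ho => by
      linarith [hs.mul_of_even he, hs.mul_of_odd ho]
    rw [hsA, hs.mul_of_even he, mul_one]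
    exact (hA.2 i j).1 ⟨he, hno⟩
  · have hne : ¬ Ge.Adj i j := fun he => by
      linarith [hs.mul_of_even he, hs.mul_of_odd ho]
    rw [hsA, hs.mul_of_odd ho]
    linarith [(hA.2 i j).2.1 ⟨ho, hne⟩]

theorem switching_apply_nonpos (hA : A ∈ SignedSet Ge Go) (hs : IsSwitching Ge Go s) {i j : V}
    (hij : i ≠ j) : s i * A i j * s j ≤ 0 := by
  by_cases hadj : (Ge ⊔ Go).Adj i j
  · exact (switching_apply_neg hA hs hadj).le
  · have hzero := (hA.2 i j).2.2 ⟨hij, fun h => hadj (Or.inl h), fun h => hadj (Or.inr h)⟩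
    simp [hzero]

theorem eq_zero_of_mulVec_eq_zero [Fintype V] (hconn : (Ge ⊔ Go).Connected)
    (hbip : IsBalanced Ge Go) (hA : A ∈ SignedSet Ge Go) (hpsd : A.PosSemidef)
    {z : V → ℝ} (hz : A *ᵥ z = 0) {v : V} (hv : z v = 0) : z = 0 := by
  classical
  obtain ⟨s, hs⟩ := hbip.exists_isSwitching
  set D := diagonal s
  have hDD : D * D = 1 := by simp [D, hs.mul_self]
  have hB : (D * A * D).PosSemidef := by
    simpa [D] using hpsd.mul_mul_conjTranspose_same D
  have hBij : ∀ i j, (D * A * D) i j = s i * A i j * s j := by simp [D]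
  have hker : (D * A * D) *ᵥ (D *ᵥ z) = 0 := by
    rw [mulVec_mulVec, mul_assoc, hDD, mul_one, ← mulVec_mulVec, hz, mulVec_zero]
  have hDz : D *ᵥ z = 0 :=
    hB.eq_zero_of_mulVec_eq_zero hconn.preconnected
      (fun i j hij => (hBij i j).symm ▸ switching_apply_nonpos hA hs hij)
      (fun i j hij => (hBij i j).symm ▸ switching_apply_neg hA hs hij) hker
      (v := v) (by simp [D, mulVec_diagonal, hv])
  calc z = D *ᵥ (D *ᵥ z) := by rw [mulVec_mulVec, hDD, one_mulVec]
    _ = 0 := by rw [hDz, mulVec_zero]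

end SignedSet

end SignedGraph

theorem stmt3_general {V : Type*} [Fintype V]
    (Ge Go : SimpleGraph V)
    (hconn : (Ge ⊔ Go).Connected)
    (hbip : IsBalanced Ge Go)
    (A : Matrix V V ℝ) (hA : A ∈ SignedSet Ge Go) (hpsd : A.PosSemidef)
    (C : Finset V) (hC : C ≠ Finset.univ) :
    (A.submatrix (fun i : {x // x ∈ C} => (i : V)) (fun i : {x // x ∈ C} => (i : V))).PosDef := by
  obtain ⟨v, hv⟩ : ∃ v, v ∉ C := by simpa [Finset.eq_univ_iff_forall] using hC
  refine hpsd.posDef_submatrix_of_ker Subtype.val_injective fun z hz hzC => ?_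
  exact SignedSet.eq_zero_of_mulVec_eq_zero hconn hbip hA hpsd hz (hzC v (by simpa using hv))

/-- In a connected bipartite signed graph, every proper principal submatrix of a
positive semidefinite matrix in `S(Ge, Go)` is positive definite. -/
theorem stmt3 {V : Type*} [Fintype V] [DecidableEq V]
    (Ge Go : SimpleGraph V)
    (hconn : (Ge ⊔ Go).Connected)
    (hbip : IsBalanced Ge Go)
    (A : Matrix V V ℝ) (hA : A ∈ SignedSet Ge Go) (hpsd : A.PosSemidef)
    (C : Finset V) (hC : C ≠ Finset.univ) :
    (A.submatrix (fun i : {x // x ∈ C} => (i : V)) (fun i : {x // x ∈ C} => (i : V))).PosDef :=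
  stmt3_general Ge Go hconn hbip A hA hpsd C hC
end

section
/- Let (Ge, Go) be a signed graph on a finite vertex type V and let v ∈ V be a vertex whose neighbor set in the union graph Ge ⊔ Go is exactly {u₁, u₂, u₃} with u₁, u₂, u₃ distinct, and such that for each i the pair v, uᵢ is adjacent in exactly one of Ge, Go. Let (Ge', Go') be the signed graph on V \ {v} (the YΔ-transformation at v) defined by: Ge'.Adj x y iff Ge.Adj x y, or x ≠ y, x, y ∈ {u₁, u₂, u₃} and the edges vx and vy have the same parity (both odd or both even); Go'.Adj x y iff Go.Adj x y, or x ≠ y, x, y ∈ {u₁, u₂, u₃} and exactly one of the edges vx, vy is odd. Then M₊(Ge, Go) ≤ M₊(Ge', Go') and ν(Ge, Go) ≤ ν(Ge', Go'). -/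
open Matrix

/-!
Pivoting on `a = A v v` replaces `A` by its Schur complement `A'` on `V \ {v}`, with entries
`A x y - A x v * A v y / a`; here `a > 0` because `A` is positive semidefinite and `v` has a
neighbour. For the extension matrix `E = pivotExtend A v` one has `A * E = Rᵀ * A'`, where `R`
restricts vectors to `V \ {v}`. Hence `A' = Eᵀ * A * E` is positive semidefinite, and `E` maps
`ker A'` isomorphically onto `ker A`. The correction term lives on the neighbours `u₁, u₂, u₃`
of `v`, and between `uᵢ` and `uⱼ` its sign is opposite to that of `A v uᵢ * A v uⱼ`: it is even
exactly when the edges `v uᵢ` and `v uⱼ` have the same parity. This is the triangle of the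
YΔ-transformation, so `A'` lies in `S(Ge', Go')`. Finally, a matrix `X'` violating the SAP for
`A'` lifts to the matrix `E * X' * Eᵀ` violating it for `A`.
-/

namespace Matrix

variable {K : Type*} [Field K] {V : Type*}

def schurAt (A : Matrix V V K) (v : V) : Matrix {x // x ≠ v} {x // x ≠ v} K :=
  of fun x y => A x y - A x v * A v y / A v v

variable [DecidableEq V]

/-- `pivotExtend A v *ᵥ x` extends `x` by the value at `v` that solves the `v`-th equation of
`A`, so `A * pivotExtend A v` is the Schur complement padded with a zero row at `v`. -/
def pivotExtend (A : Matrix V V K) (v : V) : Matrix V {x // x ≠ v} K :=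
  of fun i j => if i = v then -(A v j / A v v) else (1 : Matrix V V K) i j

variable (K) in
def restrictAt (v : V) : Matrix {x // x ≠ v} V K :=
  (1 : Matrix V V K).submatrix Subtype.val id

variable {A : Matrix V V K} {v : V}

@[simp] lemma pivotExtend_apply_self (j : {x // x ≠ v}) :
    pivotExtend A v v j = -(A v j / A v v) := if_pos rfl

@[simp] lemma pivotExtend_apply_val (i j : {x // x ≠ v}) :
    pivotExtend A v i j = (1 : Matrix {x // x ≠ v} {x // x ≠ v} K) i j := by
  simp [pivotExtend, one_apply, i.2, Subtype.ext_iff]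

variable [Fintype V]

lemma restrictAt_mul {n : Type*} (M : Matrix V n K) :
    restrictAt K v * M = M.submatrix Subtype.val id :=
  one_submatrix_mul _ (Equiv.refl V) M

lemma mul_transpose_restrictAt {m : Type*} [Fintype m] (M : Matrix m V K) :
    M * (restrictAt K v)ᵀ = M.submatrix id Subtype.val := by
  rw [restrictAt, transpose_submatrix, transpose_one]
  exact mul_submatrix_one (Equiv.refl V) _ M

lemma restrictAt_mulVec (y : V → K) :
    restrictAt K v *ᵥ y = fun i : {x // x ≠ v} => y i := by
  ext i; simp [restrictAt, mulVec, dotProduct, one_apply]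

lemma restrictAt_mul_pivotExtend : restrictAt K v * pivotExtend A v = 1 := by
  ext i j
  simp [restrictAt_mul]

lemma mul_pivotExtend_apply (i : V) (j : {x // x ≠ v}) :
    (A * pivotExtend A v) i j = A i j - A i v * A v j / A v v := by
  rw [mul_apply, Fintype.sum_eq_add_sum_subtype_ne _ v]
  simp [one_apply]
  ring

lemma mul_pivotExtend (hv : A v v ≠ 0) :
    A * pivotExtend A v = (restrictAt K v)ᵀ * A.schurAt v := by
  ext i j
  rw [mul_pivotExtend_apply, mul_apply]
  by_cases hi : i = v
  · subst hi
    rw [Finset.sum_eq_zero fun k _ => by simp [restrictAt, k.2]]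
    field_simp; ring
  · rw [Fintype.sum_eq_single ⟨i, hi⟩ fun k hk => by
      simpa [restrictAt, one_apply] using fun h => absurd (Subtype.ext h) hk]
    simp [restrictAt, schurAt, one_apply]

lemma transpose_pivotExtend_mul_mul (hv : A v v ≠ 0) :
    (pivotExtend A v)ᵀ * A * pivotExtend A v = A.schurAt v := by
  rw [Matrix.mul_assoc, mul_pivotExtend hv, ← Matrix.mul_assoc, ← transpose_mul,
    restrictAt_mul_pivotExtend, transpose_one, Matrix.one_mul]

lemma pivotExtend_mulVec_restrictAt {y : V → K} (hv : A v v ≠ 0) (hy : (A *ᵥ y) v = 0) :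
    pivotExtend A v *ᵥ (restrictAt K v *ᵥ y) = y := by
  rw [restrictAt_mulVec]
  ext i
  simp only [mulVec, dotProduct] at hy ⊢
  rw [Fintype.sum_eq_add_sum_subtype_ne _ v] at hy
  by_cases hi : i = v
  · subst hi
    simp only [pivotExtend_apply_self, neg_mul, Finset.sum_neg_distrib,
      div_mul_eq_mul_div, ← Finset.sum_div]
    rw [neg_eq_iff_eq_neg, div_eq_iff hv]
    linear_combination hy
  · lift i to {x // x ≠ v} using hi
    simp [one_apply]

lemma pivotExtend_mul_apply_self_eq_zero {X : Matrix {x // x ≠ v} {x // x ≠ v} K}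
    (hX : ∀ k l : {x // x ≠ v}, A v k ≠ 0 → A v l ≠ 0 → X k l = 0)
    {l : {x // x ≠ v}} (hl : A v l ≠ 0) : (pivotExtend A v * X) v l = 0 := by
  rw [mul_apply]
  refine Finset.sum_eq_zero fun k _ => ?_
  by_cases hk : A v k = 0
  · simp [hk]
  · rw [hX k l hk hl, mul_zero]

lemma pivotExtend_mul_mul_transpose_apply_self {X : Matrix {x // x ≠ v} {x // x ≠ v} K}
    (hX : ∀ k l : {x // x ≠ v}, A v k ≠ 0 → A v l ≠ 0 → X k l = 0) :
    (pivotExtend A v * X * (pivotExtend A v)ᵀ) v v = 0 := by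
  rw [mul_apply]
  refine Finset.sum_eq_zero fun l _ => ?_
  by_cases hl : A v l = 0
  · simp [hl]
  · rw [pivotExtend_mul_apply_self_eq_zero hX hl, zero_mul]

lemma pivotExtend_mul_mul_transpose_apply_val_right (X : Matrix {x // x ≠ v} {x // x ≠ v} K)
    (i : V) (l : {x // x ≠ v}) :
    (pivotExtend A v * X * (pivotExtend A v)ᵀ) i l = (pivotExtend A v * X) i l := by
  have h : pivotExtend A v * X * (pivotExtend A v)ᵀ * (restrictAt K v)ᵀ = pivotExtend A v * X := by
    rw [Matrix.mul_assoc, ← transpose_mul, restrictAt_mul_pivotExtend, transpose_one,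
      Matrix.mul_one]
  rw [← congrFun (congrFun h i) l, mul_transpose_restrictAt]
  rfl

lemma restrictAt_mul_mul_transpose (M : Matrix V V K) :
    restrictAt K v * M * (restrictAt K v)ᵀ = M.submatrix Subtype.val Subtype.val := by
  rw [restrictAt_mul, mul_transpose_restrictAt, submatrix_submatrix]
  rfl

lemma submatrix_pivotExtend_mul_mul_transpose (X : Matrix {x // x ≠ v} {x // x ≠ v} K) :
    (pivotExtend A v * X * (pivotExtend A v)ᵀ).submatrix Subtype.val Subtype.val = X := by
  rw [← restrictAt_mul_mul_transpose, ← Matrix.mul_assoc, ← Matrix.mul_assoc,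
    restrictAt_mul_pivotExtend, Matrix.one_mul, Matrix.mul_assoc, ← transpose_mul,
    restrictAt_mul_pivotExtend, transpose_one, Matrix.mul_one]

end Matrix

open scoped ComplexOrder in
lemma Matrix.PosSemidef.diag_pos_of_apply_ne_zero {𝕜 n : Type*} [RCLike 𝕜] [Fintype n]
    [DecidableEq n] {A : Matrix n n 𝕜} (hA : A.PosSemidef) {i j : n} (h : A i j ≠ 0) :
    0 < A i i := by
  refine hA.diag_nonneg.lt_of_ne fun hii => h ?_
  have hcol : A *ᵥ Pi.single i 1 = 0 :=
    (hA.dotProduct_mulVec_zero_iff _).1 (by simp [← hii])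
  rw [← hA.isHermitian.apply i j, show A j i = 0 by simpa using congrFun hcol j, star_zero]

section SignedSet

variable {V : Type*} {Ge Go : SimpleGraph V} {A : Matrix V V ℝ} {i j : V}

lemma apply_eq_zero_of_mem_signedSet (hA : A ∈ SignedSet Ge Go) (hij : i ≠ j)
    (h : ¬(Ge ⊔ Go).Adj i j) : A i j = 0 := by
  rw [SimpleGraph.sup_adj, not_or] at h
  exact (hA.2 i j).2.2 ⟨hij, h⟩

lemma apply_nonpos_of_mem_signedSet (hA : A ∈ SignedSet Ge Go) (hij : i ≠ j)
    (h : ¬Go.Adj i j) : A i j ≤ 0 := by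
  by_cases hge : Ge.Adj i j
  · exact ((hA.2 i j).1 ⟨hge, h⟩).le
  · exact ((hA.2 i j).2.2 ⟨hij, hge, h⟩).le

lemma apply_nonneg_of_mem_signedSet (hA : A ∈ SignedSet Ge Go) (hij : i ≠ j)
    (h : ¬Ge.Adj i j) : 0 ≤ A i j := by
  by_cases hgo : Go.Adj i j
  · exact ((hA.2 i j).2.1 ⟨hgo, h⟩).le
  · exact ((hA.2 i j).2.2 ⟨hij, h, hgo⟩).ge

lemma apply_pos_iff_of_mem_signedSet (hA : A ∈ SignedSet Ge Go) (h : (Ge ⊔ Go).Adj i j)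
    (hsingle : ¬(Ge.Adj i j ∧ Go.Adj i j)) : 0 < A i j ↔ Go.Adj i j := by
  rcases h with hge | hgo
  · have hgo : ¬Go.Adj i j := fun hgo => hsingle ⟨hge, hgo⟩
    simpa [hgo] using ((hA.2 i j).1 ⟨hge, hgo⟩).le
  · simpa [hgo] using (hA.2 i j).2.1 ⟨hgo, fun hge => hsingle ⟨hge, hgo⟩⟩

lemma apply_neg_iff_of_mem_signedSet (hA : A ∈ SignedSet Ge Go) (h : (Ge ⊔ Go).Adj i j)
    (hsingle : ¬(Ge.Adj i j ∧ Go.Adj i j)) : A i j < 0 ↔ ¬Go.Adj i j := by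
  rcases h with hge | hgo
  · have hgo : ¬Go.Adj i j := fun hgo => hsingle ⟨hge, hgo⟩
    simpa [hgo] using (hA.2 i j).1 ⟨hge, hgo⟩
  · simpa [hgo] using ((hA.2 i j).2.1 ⟨hgo, fun hge => hsingle ⟨hge, hgo⟩⟩).le

lemma apply_ne_zero_of_mem_signedSet (hA : A ∈ SignedSet Ge Go) (h : (Ge ⊔ Go).Adj i j)
    (hsingle : ¬(Ge.Adj i j ∧ Go.Adj i j)) : A i j ≠ 0 := by
  by_cases hgo : Go.Adj i j
  · exact ((apply_pos_iff_of_mem_signedSet hA h hsingle).2 hgo).ne'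
  · exact ((apply_neg_iff_of_mem_signedSet hA h hsingle).2 hgo).ne

variable {v x y : V}

lemma mul_pos_iff_of_mem_signedSet (hA : A ∈ SignedSet Ge Go)
    (hsingle : ∀ x, ¬(Ge.Adj v x ∧ Go.Adj v x)) (hx : v ≠ x) (hy : v ≠ y) :
    0 < A v x * A v y ↔
      (Ge ⊔ Go).Adj v x ∧ (Ge ⊔ Go).Adj v y ∧ (Go.Adj v x ↔ Go.Adj v y) := by
  by_cases hx' : (Ge ⊔ Go).Adj v x
  · by_cases hy' : (Ge ⊔ Go).Adj v y
    · rw [mul_pos_iff, apply_pos_iff_of_mem_signedSet hA hx' (hsingle x),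
        apply_pos_iff_of_mem_signedSet hA hy' (hsingle y),
        apply_neg_iff_of_mem_signedSet hA hx' (hsingle x),
        apply_neg_iff_of_mem_signedSet hA hy' (hsingle y)]
      tauto
    · simp [apply_eq_zero_of_mem_signedSet hA hy hy', hy']
  · simp [apply_eq_zero_of_mem_signedSet hA hx hx', hx']

lemma mul_neg_iff_of_mem_signedSet (hA : A ∈ SignedSet Ge Go)
    (hsingle : ∀ x, ¬(Ge.Adj v x ∧ Go.Adj v x)) (hx : v ≠ x) (hy : v ≠ y) :
    A v x * A v y < 0 ↔
      (Ge ⊔ Go).Adj v x ∧ (Ge ⊔ Go).Adj v y ∧ ¬(Go.Adj v x ↔ Go.Adj v y) := by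
  by_cases hx' : (Ge ⊔ Go).Adj v x
  · by_cases hy' : (Ge ⊔ Go).Adj v y
    · rw [mul_neg_iff, apply_pos_iff_of_mem_signedSet hA hx' (hsingle x),
        apply_pos_iff_of_mem_signedSet hA hy' (hsingle y),
        apply_neg_iff_of_mem_signedSet hA hx' (hsingle x),
        apply_neg_iff_of_mem_signedSet hA hy' (hsingle y)]
      tauto
    · simp [apply_eq_zero_of_mem_signedSet hA hy hy', hy']
  · simp [apply_eq_zero_of_mem_signedSet hA hx hx', hx']

end SignedSet

section Pivot

variable {V : Type*} {A : Matrix V V ℝ} {v : V} {Ge Go : SimpleGraph V}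
  {Ge' Go' : SimpleGraph {x // x ≠ v}}

theorem schurAt_mem_signedSet (hA : A ∈ SignedSet Ge Go) (hv : 0 < A v v)
    (hGe' : ∀ x y : {x // x ≠ v}, Ge'.Adj x y ↔ Ge.Adj x y ∨ (x ≠ y ∧ 0 < A v x * A v y))
    (hGo' : ∀ x y : {x // x ≠ v}, Go'.Adj x y ↔ Go.Adj x y ∨ (x ≠ y ∧ A v x * A v y < 0)) :
    A.schurAt v ∈ SignedSet Ge' Go' := by
  have hentry : ∀ x y : {x // x ≠ v}, A.schurAt v x y = A x y - A v x * A v y / A v v :=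
    fun x y => by rw [schurAt, of_apply, hA.1.apply v x]
  refine ⟨IsSymm.ext fun x y => by rw [hentry, hentry, hA.1.apply, mul_comm], fun x y => ?_⟩
  refine ⟨fun ⟨he, ho⟩ => ?_, fun ⟨ho, he⟩ => ?_, fun ⟨hxy, he, ho⟩ => ?_⟩
  · have hxy : (x : V) ≠ y := Subtype.coe_ne_coe.2 (Ge'.ne_of_adj he)
    have hgo : ¬Go.Adj x y := fun h => ho ((hGo' x y).2 (Or.inl h))
    have hp : 0 ≤ A v x * A v y :=
      not_lt.1 fun h => ho ((hGo' x y).2 (Or.inr ⟨Ge'.ne_of_adj he, h⟩))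
    rw [hentry]
    rcases (hGe' x y).1 he with hge | ⟨-, hp'⟩
    · linarith [(hA.2 x y).1 ⟨hge, hgo⟩, div_nonneg hp hv.le]
    · linarith [apply_nonpos_of_mem_signedSet hA hxy hgo, div_pos hp' hv]
  · have hxy : (x : V) ≠ y := Subtype.coe_ne_coe.2 (Go'.ne_of_adj ho)
    have hge : ¬Ge.Adj x y := fun h => he ((hGe' x y).2 (Or.inl h))
    have hp : A v x * A v y ≤ 0 :=
      not_lt.1 fun h => he ((hGe' x y).2 (Or.inr ⟨Go'.ne_of_adj ho, h⟩))
    rw [hentry]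
    rcases (hGo' x y).1 ho with hgo | ⟨-, hp'⟩
    · linarith [(hA.2 x y).2.1 ⟨hgo, hge⟩, div_nonpos_of_nonpos_of_nonneg hp hv.le]
    · linarith [apply_nonneg_of_mem_signedSet hA hxy hge, div_neg_of_neg_of_pos hp' hv]
  · rw [hGe', not_or] at he
    rw [hGo', not_or] at ho
    have hp : A v x * A v y = 0 := by
      rcases lt_trichotomy (A v x * A v y) 0 with h | h | h
      exacts [absurd ⟨hxy, h⟩ ho.2, h, absurd ⟨hxy, h⟩ he.2]
    rw [hentry, hp, zero_div, sub_zero]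
    exact (hA.2 x y).2.2 ⟨Subtype.coe_ne_coe.2 hxy, he.1, ho.1⟩

variable [Fintype V] [DecidableEq V]

theorem matNullity_schurAt (hv : A v v ≠ 0) : matNullity (A.schurAt v) = matNullity A := by
  have hE : ∀ x ∈ LinearMap.ker (A.schurAt v).mulVecLin,
      (pivotExtend A v).mulVecLin x ∈ LinearMap.ker A.mulVecLin := by
    intro x hx
    simp only [LinearMap.mem_ker, mulVecLin_apply] at hx ⊢
    rw [mulVec_mulVec, mul_pivotExtend hv, ← mulVec_mulVec, hx, mulVec_zero]
  have hR : ∀ y ∈ LinearMap.ker A.mulVecLin,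
      (restrictAt ℝ v).mulVecLin y ∈ LinearMap.ker (A.schurAt v).mulVecLin := by
    intro y hy
    simp only [LinearMap.mem_ker, mulVecLin_apply] at hy ⊢
    rw [← transpose_pivotExtend_mul_mul hv, ← mulVec_mulVec, ← mulVec_mulVec,
      pivotExtend_mulVec_restrictAt hv (congrFun hy v), hy, mulVec_zero]
  refine (LinearEquiv.ofLinearMap ((pivotExtend A v).mulVecLin.restrict hE)
    ((restrictAt ℝ v).mulVecLin.restrict hR) ?_ ?_).finrank_eq
  · ext ⟨y, hy⟩ : 1
    have hAy : A *ᵥ y = 0 := hy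
    exact Subtype.ext (pivotExtend_mulVec_restrictAt hv (congrFun hAy v))
  · ext ⟨x, hx⟩ : 1
    exact Subtype.ext (by simp [mulVec_mulVec, restrictAt_mul_pivotExtend])

theorem Matrix.PosSemidef.schurAt (hA : A.PosSemidef) (hv : A v v ≠ 0) :
    (A.schurAt v).PosSemidef := by
  rw [← transpose_pivotExtend_mul_mul hv, ← conjTranspose_eq_transpose_of_trivial]
  exact hA.conjTranspose_mul_mul_same _

theorem HasSAP.schurAt (hA : HasSAP Ge Go A) (hv : A v v ≠ 0)
    (hnbr : ∀ x, (Ge ⊔ Go).Adj v x → A v x ≠ 0)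
    (hGe' : ∀ x y : {x // x ≠ v}, Ge'.Adj x y ↔ Ge.Adj x y ∨ (x ≠ y ∧ 0 < A v x * A v y))
    (hGo' : ∀ x y : {x // x ≠ v}, Go'.Adj x y ↔ Go.Adj x y ∨ (x ≠ y ∧ A v x * A v y < 0)) :
    HasSAP Ge' Go' (A.schurAt v) := by
  intro X hXsymm hXzero hAX
  set E := pivotExtend A v
  -- The neighbours of `v` form a clique in `Ge' ⊔ Go'`, so `X` vanishes on them; this kills
  -- the entries of `E * X * Eᵀ` at `(v, v)` and between `v` and its neighbours.
  have hN : ∀ k l : {x // x ≠ v}, A v k ≠ 0 → A v l ≠ 0 → X k l = 0 := by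
    refine fun k l hk hl => hXzero k l ((eq_or_ne k l).imp_right fun hkl => ?_)
    rcases (mul_ne_zero hk hl).lt_or_gt with h | h
    exacts [Or.inr ((hGo' k l).2 (Or.inr ⟨hkl, h⟩)), Or.inl ((hGe' k l).2 (Or.inr ⟨hkl, h⟩))]
  have hvrow : ∀ j, (v = j ∨ (Ge ⊔ Go).Adj v j) → (E * X * Eᵀ) v j = 0 := by
    rintro j (rfl | hj)
    · exact pivotExtend_mul_mul_transpose_apply_self hN
    · lift j to {x // x ≠ v} using hj.ne.symm
      rw [pivotExtend_mul_mul_transpose_apply_val_right]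
      exact pivotExtend_mul_apply_self_eq_zero hN (hnbr j hj)
  have hsymm : (E * X * Eᵀ).IsSymm := by
    rw [IsSymm, transpose_mul, transpose_mul, transpose_transpose, hXsymm.eq, Matrix.mul_assoc]
  suffices E * X * Eᵀ = 0 by rw [← submatrix_pivotExtend_mul_mul_transpose X, this]; rfl
  refine hA _ hsymm (fun i j hij => ?_) ?_
  · by_cases hi : i = v
    · subst hi; exact hvrow j hij
    by_cases hj : j = v
    · subst hj; rw [← hsymm.apply]; exact hvrow i (hij.imp Eq.symm SimpleGraph.Adj.symm)
    lift i to {x // x ≠ v} using hi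
    lift j to {x // x ≠ v} using hj
    rw [← submatrix_apply (E * X * Eᵀ) Subtype.val Subtype.val,
      submatrix_pivotExtend_mul_mul_transpose]
    refine hXzero i j (hij.imp Subtype.ext fun h => ?_)
    rcases h with h | h
    exacts [Or.inl ((hGe' i j).2 (Or.inl h)), Or.inr ((hGo' i j).2 (Or.inl h))]
  · rw [← Matrix.mul_assoc, ← Matrix.mul_assoc, mul_pivotExtend hv,
      Matrix.mul_assoc _ (A.schurAt v), hAX, Matrix.mul_zero, Matrix.zero_mul]

end Pivot

lemma matNullity_le_card {V : Type*} [Fintype V] (A : Matrix V V ℝ) :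
    matNullity A ≤ Fintype.card V := by
  simpa [matNullity] using (LinearMap.ker A.mulVecLin).finrank_le

section Monotone

variable {V W : Type*} [Fintype V] [Fintype W] {Ge Go : SimpleGraph V} {He Ho : SimpleGraph W}

lemma MplusSigned_le_of_forall_exists
    (h : ∀ A ∈ SignedSet Ge Go, A.PosSemidef →
      ∃ B ∈ SignedSet He Ho, B.PosSemidef ∧ matNullity B = matNullity A) :
    MplusSigned Ge Go ≤ MplusSigned He Ho := by
  refine csSup_le_csSup' ⟨Fintype.card W, ?_⟩ ?_
  · rintro _ ⟨B, -, -, rfl⟩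
    exact matNullity_le_card B
  · rintro _ ⟨A, hA, hpsd, rfl⟩
    exact h A hA hpsd

lemma nuSigned_le_of_forall_exists
    (h : ∀ A ∈ SignedSet Ge Go, A.PosSemidef → HasSAP Ge Go A →
      ∃ B ∈ SignedSet He Ho, B.PosSemidef ∧ HasSAP He Ho B ∧ matNullity B = matNullity A) :
    nuSigned Ge Go ≤ nuSigned He Ho := by
  refine csSup_le_csSup' ⟨Fintype.card W, ?_⟩ ?_
  · rintro _ ⟨B, -, -, -, rfl⟩
    exact matNullity_le_card B
  · rintro _ ⟨A, hA, hpsd, hsap, rfl⟩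
    exact h A hA hpsd hsap

end Monotone

theorem stmt5_general {V : Type*} [Fintype V] [DecidableEq V]
    (Ge Go : SimpleGraph V) (v u₁ u₂ u₃ : V)
    (hnbr : ∀ x, (Ge ⊔ Go).Adj v x ↔ (x = u₁ ∨ x = u₂ ∨ x = u₃))
    (hone : ∀ x, (x = u₁ ∨ x = u₂ ∨ x = u₃) → ¬(Ge.Adj v x ∧ Go.Adj v x))
    (Ge' Go' : SimpleGraph {x : V // x ≠ v})
    (hGe' : ∀ x y : {x : V // x ≠ v}, Ge'.Adj x y ↔
      (Ge.Adj (x : V) (y : V) ∨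
        (x ≠ y ∧ ((x : V) = u₁ ∨ (x : V) = u₂ ∨ (x : V) = u₃) ∧
          ((y : V) = u₁ ∨ (y : V) = u₂ ∨ (y : V) = u₃) ∧
          (Go.Adj v (x : V) ↔ Go.Adj v (y : V)))))
    (hGo' : ∀ x y : {x : V // x ≠ v}, Go'.Adj x y ↔
      (Go.Adj (x : V) (y : V) ∨
        (x ≠ y ∧ ((x : V) = u₁ ∨ (x : V) = u₂ ∨ (x : V) = u₃) ∧
          ((y : V) = u₁ ∨ (y : V) = u₂ ∨ (y : V) = u₃) ∧
          ¬(Go.Adj v (x : V) ↔ Go.Adj v (y : V))))) :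
    MplusSigned Ge Go ≤ MplusSigned Ge' Go' ∧ nuSigned Ge Go ≤ nuSigned Ge' Go' := by
  have hsingle : ∀ x, ¬(Ge.Adj v x ∧ Go.Adj v x) :=
    fun x h => hone x ((hnbr x).1 (Or.inl h.1)) h
  have hpivot : ∀ A ∈ SignedSet Ge Go, A.PosSemidef → 0 < A v v ∧
      (∀ x y, Ge'.Adj x y ↔ Ge.Adj x y ∨ (x ≠ y ∧ 0 < A v x * A v y)) ∧
      (∀ x y, Go'.Adj x y ↔ Go.Adj x y ∨ (x ≠ y ∧ A v x * A v y < 0)) := by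
    intro A hA hpsd
    refine ⟨hpsd.diag_pos_of_apply_ne_zero (apply_ne_zero_of_mem_signedSet hA
      ((hnbr u₁).2 (Or.inl rfl)) (hsingle u₁)), fun x y => ?_, fun x y => ?_⟩
    · rw [hGe', mul_pos_iff_of_mem_signedSet hA hsingle x.2.symm y.2.symm, hnbr, hnbr]
    · rw [hGo', mul_neg_iff_of_mem_signedSet hA hsingle x.2.symm y.2.symm, hnbr, hnbr]
  refine ⟨MplusSigned_le_of_forall_exists fun A hA hpsd => ?_,
    nuSigned_le_of_forall_exists fun A hA hpsd hsap => ?_⟩ <;>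
  obtain ⟨hv, hGe'', hGo''⟩ := hpivot A hA hpsd
  · exact ⟨A.schurAt v, schurAt_mem_signedSet hA hv hGe'' hGo'', hpsd.schurAt hv.ne',
      matNullity_schurAt hv.ne'⟩
  · exact ⟨A.schurAt v, schurAt_mem_signedSet hA hv hGe'' hGo'', hpsd.schurAt hv.ne',
      hsap.schurAt hv.ne' (fun x hx => apply_ne_zero_of_mem_signedSet hA hx (hsingle x))
        hGe'' hGo'',
      matNullity_schurAt hv.ne'⟩

/-- a `YΔ`-transformation at a degree-three vertex `v` does not decrease
`M₊` nor `ν`. -/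
theorem stmt5 {V : Type*} [Fintype V] [DecidableEq V]
    (Ge Go : SimpleGraph V) (v u₁ u₂ u₃ : V)
    (h12 : u₁ ≠ u₂) (h13 : u₁ ≠ u₃) (h23 : u₂ ≠ u₃)
    (hnbr : ∀ x, (Ge ⊔ Go).Adj v x ↔ (x = u₁ ∨ x = u₂ ∨ x = u₃))
    (hone : ∀ x, (x = u₁ ∨ x = u₂ ∨ x = u₃) → ¬(Ge.Adj v x ∧ Go.Adj v x))
    (Ge' Go' : SimpleGraph {x : V // x ≠ v})
    (hGe' : ∀ x y : {x : V // x ≠ v}, Ge'.Adj x y ↔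
      (Ge.Adj (x : V) (y : V) ∨
        (x ≠ y ∧ ((x : V) = u₁ ∨ (x : V) = u₂ ∨ (x : V) = u₃) ∧
          ((y : V) = u₁ ∨ (y : V) = u₂ ∨ (y : V) = u₃) ∧
          (Go.Adj v (x : V) ↔ Go.Adj v (y : V)))))
    (hGo' : ∀ x y : {x : V // x ≠ v}, Go'.Adj x y ↔
      (Go.Adj (x : V) (y : V) ∨
        (x ≠ y ∧ ((x : V) = u₁ ∨ (x : V) = u₂ ∨ (x : V) = u₃) ∧
          ((y : V) = u₁ ∨ (y : V) = u₂ ∨ (y : V) = u₃) ∧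
          ¬(Go.Adj v (x : V) ↔ Go.Adj v (y : V))))) :
    MplusSigned Ge Go ≤ MplusSigned Ge' Go' ∧ nuSigned Ge Go ≤ nuSigned Ge' Go' :=
  stmt5_general Ge Go v u₁ u₂ u₃ hnbr hone Ge' Go' hGe' hGo'
end

section
/- Let A ∈ S(Ge, Go) be positive semidefinite and have the SAP. Let S ⊆ V and let C₁ and C₂ be the vertex sets of two distinct connected components of the subgraph of the union graph Ge ⊔ Go induced on V \ S. Then at least one of the principal submatrices A[C₁], A[C₂] is nonsingular; that is, at most one connected component C of (Ge ⊔ Go) − S has nullity(A[C]) > 0. -/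
open Matrix

/-!
Suppose nonzero `x` and `y`, supported on `C₁` and `C₂`, satisfy `(A x)ᵢ = 0` on `C₁` and
`(A y)ᵢ = 0` on `C₂`. Then `xᵀ A x = 0`, which for positive semidefinite `A` forces `A x = 0`;
likewise `A y = 0`. Distinct components of `(Ge ⊔ Go) − S` share no vertex and no edge, so
`X = x yᵀ + y xᵀ` is a symmetric matrix vanishing on the diagonal and on the edges of `Ge ⊔ Go`
with `A X = 0`; it is nonzero since `x` and `y` are, contradicting the SAP.
-/

open scoped ComplexOrder

theorem Matrix.PosSemidef.mulVec_eq_zero_of_supported {n 𝕜 : Type*} [Fintype n] [RCLike 𝕜]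
    {A : Matrix n n 𝕜} (hA : A.PosSemidef) {C : Set n} {x : n → 𝕜}
    (hx : ∀ i, i ∉ C → x i = 0) (hAx : ∀ i ∈ C, (A *ᵥ x) i = 0) : A *ᵥ x = 0 := by
  refine (hA.dotProduct_mulVec_zero_iff x).mp (Finset.sum_eq_zero fun i _ => ?_)
  by_cases hi : i ∈ C
  · simp [hAx i hi]
  · simp [hx i hi]

theorem SimpleGraph.ConnectedComponent.eq_of_mem_image_supp {V : Type*} {G : SimpleGraph V}
    {s : Set V} {c d : (G.induce s).ConnectedComponent} {i j : V}
    (hi : i ∈ Subtype.val '' c.supp) (hj : j ∈ Subtype.val '' d.supp)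
    (hij : i = j ∨ G.Adj i j) : c = d := by
  obtain ⟨a, ha, rfl⟩ := hi
  obtain ⟨b, hb, rfl⟩ := hj
  rcases hij with hab | hab
  · rw [Subtype.ext hab] at ha
    exact ha.symm.trans hb
  · have hadj : (G.induce s).Adj a b := hab
    exact (c.mem_supp_of_adj_mem_supp ha hadj).symm.trans hb

theorem HasSAP.eq_zero_or_eq_zero {V : Type*} [Fintype V] {Ge Go : SimpleGraph V}
    {A : Matrix V V ℝ} (hsap : HasSAP Ge Go A) {x y : V → ℝ} (hx : A *ᵥ x = 0)
    (hy : A *ᵥ y = 0) (hxy : ∀ i j, (i = j ∨ (Ge ⊔ Go).Adj i j) → x i * y j = 0) :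
    x = 0 ∨ y = 0 := by
  set X := vecMulVec x y + vecMulVec y x
  have hX_symm : X.IsSymm := by
    simp only [X, IsSymm, transpose_add, transpose_vecMulVec, add_comm]
  have hX_pattern : ∀ i j, (i = j ∨ (Ge ⊔ Go).Adj i j) → X i j = 0 := by
    intro i j hij
    have hji := hxy j i (hij.imp Eq.symm SimpleGraph.Adj.symm)
    simp [X, vecMulVec_apply, hxy i j hij, mul_comm (y i), hji]
  have hAX : A * X = 0 := by
    simp [X, mul_add, mul_vecMulVec, hx, hy]
  have hX_zero := hsap X hX_symm hX_pattern hAX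
  refine or_iff_not_imp_left.mpr fun hx_ne => ?_
  obtain ⟨i, hxi⟩ := Function.ne_iff.mp hx_ne
  have hyi : y i = 0 := (mul_eq_zero.mp (hxy i i (Or.inl rfl))).resolve_left hxi
  funext j
  have hXij : x i * y j = 0 := by
    simpa [X, vecMulVec_apply, hyi] using congrFun (congrFun hX_zero i) j
  exact (mul_eq_zero.mp hXij).resolve_left hxi

theorem stmt9_general {V : Type*} [Fintype V]
    (Ge Go : SimpleGraph V) (A : Matrix V V ℝ)
    (hpsd : A.PosSemidef) (hsap : HasSAP Ge Go A)
    (S : Set V)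
    (c₁ c₂ : ((Ge ⊔ Go).induce Sᶜ).ConnectedComponent) (hcc : c₁ ≠ c₂)
    (C₁ C₂ : Set V)
    (hC₁ : C₁ = Subtype.val '' c₁.supp) (hC₂ : C₂ = Subtype.val '' c₂.supp) :
    (∀ x : V → ℝ, (∀ i, i ∉ C₁ → x i = 0) → (∀ i ∈ C₁, A.mulVec x i = 0) → x = 0) ∨
    (∀ x : V → ℝ, (∀ i, i ∉ C₂ → x i = 0) → (∀ i ∈ C₂, A.mulVec x i = 0) → x = 0) := by
  subst hC₁ hC₂
  by_contra! h
  obtain ⟨⟨x, hx_supp, hx_ker, hx⟩, ⟨y, hy_supp, hy_ker, hy⟩⟩ := h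
  have hxy : ∀ i j, (i = j ∨ (Ge ⊔ Go).Adj i j) → x i * y j = 0 := by
    intro i j hij
    by_contra hne
    have hi : i ∈ Subtype.val '' c₁.supp :=
      by_contra fun hi => left_ne_zero_of_mul hne (hx_supp i hi)
    have hj : j ∈ Subtype.val '' c₂.supp :=
      by_contra fun hj => right_ne_zero_of_mul hne (hy_supp j hj)
    exact hcc (SimpleGraph.ConnectedComponent.eq_of_mem_image_supp hi hj hij)
  rcases hsap.eq_zero_or_eq_zero (hpsd.mulVec_eq_zero_of_supported hx_supp hx_ker)
      (hpsd.mulVec_eq_zero_of_supported hy_supp hy_ker) hxy with h | h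
  exacts [hx h, hy h]

/-- if `A ∈ S(Ge, Go)` is positive semidefinite and has the SAP, then among
the connected components of `(Ge ⊔ Go) − S`, at most one has a singular principal
submatrix: for any two distinct components with vertex sets `C₁`, `C₂`, at least one of
`A[C₁]`, `A[C₂]` is nonsingular (its kernel is trivial). -/
theorem stmt9 {V : Type*} [Fintype V] [DecidableEq V]
    (Ge Go : SimpleGraph V) (A : Matrix V V ℝ)
    (hA : A ∈ SignedSet Ge Go) (hpsd : A.PosSemidef) (hsap : HasSAP Ge Go A)
    (S : Set V)
    (c₁ c₂ : ((Ge ⊔ Go).induce Sᶜ).ConnectedComponent) (hcc : c₁ ≠ c₂)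
    (C₁ C₂ : Set V)
    (hC₁ : C₁ = Subtype.val '' c₁.supp) (hC₂ : C₂ = Subtype.val '' c₂.supp) :
    (∀ x : V → ℝ, (∀ i, i ∉ C₁ → x i = 0) → (∀ i ∈ C₁, A.mulVec x i = 0) → x = 0) ∨
    (∀ x : V → ℝ, (∀ i, i ∉ C₂ → x i = 0) → (∀ i ∈ C₂, A.mulVec x i = 0) → x = 0) :=
  stmt9_general Ge Go A hpsd hsap S c₁ c₂ hcc C₁ C₂ hC₁ hC₂
end
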